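/- Let X and Q be random variables and W_1, ..., W_K be mutually independent random variables, with Q independent of (W_1,...,W_K) and X a deterministic function of (Q, W_1, ..., W_K). If I(W_1,...,W_K ; X | W_1 + ... + W_K) = 0 (security), then H(Q) ≥ H(X) - H(W_1 + ... + W_K). -/
import Mathlib


open Finset

/-- Probability that the random variable `X` (on a finite sample space with
mass function `p`) takes the value `s`. -/
noncomputable def pr {Ω : Type*} [Fintype Ω] (p : Ω → ℝ) {S : Type*}
    [DecidableEq S] (X : Ω → S) (s : S) : ℝ :=
  ∑ ω ∈ univ.filter (fun ω => X ω = s), p ω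

/-- Shannon entropy of a finite-valued random variable
(with the convention `0 · log 0 = 0`, automatic since `Real.log 0 = 0`). -/
noncomputable def entropy {Ω : Type*} [Fintype Ω] (p : Ω → ℝ) {S : Type*}
    [Fintype S] [DecidableEq S] (X : Ω → S) : ℝ :=
  -∑ s : S, pr p X s * Real.log (pr p X s)

/-- Conditional entropy `H(X | Y) = H(X, Y) - H(Y)`. -/
noncomputable def condEntropy {Ω : Type*} [Fintype Ω] (p : Ω → ℝ)
    {S T : Type*} [Fintype S] [DecidableEq S] [Fintype T] [DecidableEq T]
    (X : Ω → S) (Y : Ω → T) : ℝ :=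
  entropy p (fun ω => (X ω, Y ω)) - entropy p Y

section
variable {Ω : Type*} [Fintype Ω] (p : Ω → ℝ)

lemma pr_nonneg (hp0 : ∀ ω, 0 ≤ p ω) {S : Type*} [DecidableEq S] (X : Ω → S) (s : S) :
    0 ≤ pr p X s := Finset.sum_nonneg fun ω _ => hp0 ω

lemma sum_pr {S : Type*} [Fintype S] [DecidableEq S] (X : Ω → S) :
    ∑ s : S, pr p X s = ∑ ω, p ω := by
  unfold pr
  exact Finset.sum_fiberwise univ X p

lemma entropy_comp_inj {S T : Type*} [Fintype S] [DecidableEq S] [Fintype T] [DecidableEq T]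
    (X : Ω → S) (f : S → T) (hf : Function.Injective f) :
    entropy p (fun ω => f (X ω)) = entropy p X := by
  unfold entropy
  congr 1
  have h1 : ∀ s, pr p (fun ω => f (X ω)) (f s) = pr p X s := by
    intro s; unfold pr; congr 1; ext ω; simp [hf.eq_iff]
  have h2 : ∀ t, t ∉ Finset.image f Finset.univ → pr p (fun ω => f (X ω)) t = 0 := by
    intro t ht
    apply Finset.sum_eq_zero
    intro ω hω
    simp only [Finset.mem_filter] at hω
    exact absurd (Finset.mem_image.mpr ⟨X ω, Finset.mem_univ _, hω.2⟩) ht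
  rw [← Finset.sum_subset (Finset.subset_univ (Finset.image f Finset.univ))
      (fun t _ ht => by rw [h2 t ht]; simp)]
  rw [Finset.sum_image (fun a _ b _ h => hf h)]
  exact Finset.sum_congr rfl fun s _ => by rw [h1]

lemma pr_snd_eq_sum {S T : Type*} [Fintype S] [DecidableEq S] [DecidableEq T]
    (X : Ω → S) (Y : Ω → T) (t : T) :
    pr p Y t = ∑ s : S, pr p (fun ω => (X ω, Y ω)) (s, t) := by
  unfold pr
  rw [← Finset.sum_fiberwise (univ.filter fun ω => Y ω = t) X p]
  refine Finset.sum_congr rfl fun s _ => Finset.sum_congr ?_ fun _ _ => rfl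
  rw [Finset.filter_filter]
  apply Finset.filter_congr
  intro ω _
  constructor
  · rintro ⟨h1, h2⟩; exact Prod.ext h2 h1
  · intro h; exact ⟨congrArg Prod.snd h, congrArg Prod.fst h⟩

lemma entropy_pair_ge_snd (hp0 : ∀ ω, 0 ≤ p ω) {S T : Type*} [Fintype S] [DecidableEq S]
    [Fintype T] [DecidableEq T] (X : Ω → S) (Y : Ω → T) :
    entropy p Y ≤ entropy p (fun ω => (X ω, Y ω)) := by
  unfold entropy
  apply neg_le_neg
  rw [Fintype.sum_prod_type, Finset.sum_comm]
  apply Finset.sum_le_sum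
  intro t _
  have hr : pr p Y t = ∑ s : S, pr p (fun ω => (X ω, Y ω)) (s, t) := pr_snd_eq_sum p X Y t
  calc ∑ s : S, pr p (fun ω => (X ω, Y ω)) (s, t) * Real.log (pr p (fun ω => (X ω, Y ω)) (s, t))
      ≤ ∑ s : S, pr p (fun ω => (X ω, Y ω)) (s, t) * Real.log (pr p Y t) := by
        apply Finset.sum_le_sum
        intro s _
        rcases eq_or_lt_of_le (pr_nonneg p hp0 (fun ω => (X ω, Y ω)) (s, t)) with h | h
        · rw [← h]; simp
        · apply mul_le_mul_of_nonneg_left _ h.le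
          apply Real.log_le_log h
          rw [hr]
          exact Finset.single_le_sum (fun s' _ => pr_nonneg p hp0 (fun ω => (X ω, Y ω)) (s', t)) (Finset.mem_univ s)
    _ = pr p Y t * Real.log (pr p Y t) := by rw [← Finset.sum_mul, ← hr]

lemma mul_log_mul (x y : ℝ) :
    x * y * Real.log (x * y) = y * (x * Real.log x) + x * (y * Real.log y) := by
  rcases eq_or_ne x 0 with rfl | hx
  · simp
  rcases eq_or_ne y 0 with rfl | hy
  · simp
  rw [Real.log_mul hx hy]; ring

lemma entropy_indep_pair {S T : Type*} [Fintype S] [DecidableEq S] [Fintype T] [DecidableEq T]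
    (X : Ω → S) (Y : Ω → T)
    (h : ∀ s t, pr p (fun ω => (X ω, Y ω)) (s, t) = pr p X s * pr p Y t)
    (hX : ∑ s : S, pr p X s = 1) (hY : ∑ t : T, pr p Y t = 1) :
    entropy p (fun ω => (X ω, Y ω)) = entropy p X + entropy p Y := by
  unfold entropy
  rw [Fintype.sum_prod_type]
  have : ∀ s : S, ∑ t : T, pr p (fun ω => (X ω, Y ω)) (s, t)
      * Real.log (pr p (fun ω => (X ω, Y ω)) (s, t))
      = pr p X s * Real.log (pr p X s) + pr p X s * ∑ t : T, pr p Y t * Real.log (pr p Y t) := by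
    intro s
    simp only [h, mul_log_mul]
    rw [Finset.sum_add_distrib, ← Finset.sum_mul, ← Finset.mul_sum, hY, one_mul]
  simp only [this]
  rw [Finset.sum_add_distrib, ← Finset.sum_mul, hX, one_mul]
  ring

end

lemma entropy_pair_ge_fst {Ω : Type*} [Fintype Ω] (p : Ω → ℝ) (hp0 : ∀ ω, 0 ≤ p ω)
    {S T : Type*} [Fintype S] [DecidableEq S] [Fintype T] [DecidableEq T]
    (X : Ω → S) (Y : Ω → T) :
    entropy p X ≤ entropy p (fun ω => (X ω, Y ω)) := by
  have h := entropy_pair_ge_snd p hp0 Y X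
  have hswap : entropy p (fun ω => (X ω, Y ω)) = entropy p (fun ω => (Y ω, X ω)) :=
    entropy_comp_inj p (fun ω => (Y ω, X ω)) Prod.swap Prod.swap_injective
  rw [hswap]; exact h

/-- if `W_1, …, W_K` are mutually independent, `Q` is independent
of `(W_1, …, W_K)`, `X` is a deterministic function of `(Q, W_1, …, W_K)`
(i.e. `H(X | Q, W) = 0`), and the security constraint
`I(W_1, …, W_K ; X | W_1 + ⋯ + W_K) = 0` holds, then
`H(Q) ≥ H(X) - H(W_1 + ⋯ + W_K)`. -/
theorem stmt_6 {Ω 𝒳 𝒬 G : Type*} [Fintype Ω]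
    [Fintype 𝒳] [DecidableEq 𝒳] [Fintype 𝒬] [DecidableEq 𝒬]
    [Fintype G] [DecidableEq G] [AddCommGroup G] {K : ℕ}
    (p : Ω → ℝ) (hp0 : ∀ ω, 0 ≤ p ω) (hp1 : ∑ ω, p ω = 1)
    (W : Fin K → Ω → G) (Q : Ω → 𝒬) (X : Ω → 𝒳)
    -- the `W_i` are mutually independent
    (hWindep : ∀ w : Fin K → G,
      pr p (fun ω i => W i ω) w = ∏ i, pr p (W i) (w i))
    -- `Q` is independent of `(W_1, …, W_K)`
    (hQindep : ∀ (q : 𝒬) (w : Fin K → G),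
      pr p (fun ω => (Q ω, fun i => W i ω)) (q, w)
        = pr p Q q * pr p (fun ω i => W i ω) w)
    -- `X` is a function of `(Q, W_1, …, W_K)`: `H(X | Q, W) = 0`
    (hfun : condEntropy p X (fun ω => (Q ω, fun i => W i ω)) = 0)
    -- security: `I(W ; X | W_1 + ⋯ + W_K) = 0`, written as
    -- `H(W, Σ) + H(X, Σ) - H(W, X, Σ) - H(Σ) = 0`
    (hsec : entropy p (fun ω => ((fun i => W i ω), ∑ i, W i ω))
        + entropy p (fun ω => (X ω, ∑ i, W i ω))
        - entropy p (fun ω => ((fun i => W i ω), X ω, ∑ i, W i ω))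
        - entropy p (fun ω => ∑ i, W i ω) = 0) :
    entropy p Q ≥ entropy p X - entropy p (fun ω => ∑ i, W i ω) := by
  classical
  have hQ1 : ∑ q : 𝒬, pr p Q q = 1 := by rw [sum_pr, hp1]
  have hW1 : ∑ w : Fin K → G, pr p (fun ω i => W i ω) w = 1 := by rw [sum_pr, hp1]
  have ha : entropy p (fun ω => ((fun i => W i ω), ∑ i, W i ω))
      = entropy p (fun ω i => W i ω) :=
    entropy_comp_inj p (fun ω i => W i ω) (fun w => (w, ∑ i, w i))
      (fun a b h => congrArg Prod.fst h)
  have hb : entropy p (fun ω => ((fun i => W i ω), X ω, ∑ i, W i ω))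
      = entropy p (fun ω => ((fun i => W i ω), X ω)) :=
    entropy_comp_inj p (fun ω => ((fun i => W i ω), X ω))
      (fun wx => (wx.1, wx.2, ∑ i, wx.1 i))
      (fun a b h => by
        have h1 := congrArg Prod.fst h
        have h2 := congrArg (fun z => z.2.1) h
        exact Prod.ext_iff.mpr ⟨h1, h2⟩)
  have h1 : entropy p X ≤ entropy p (fun ω => (X ω, ∑ i, W i ω)) :=
    entropy_pair_ge_fst p hp0 X (fun ω => ∑ i, W i ω)
  have h3 : entropy p (fun ω => ((fun i => W i ω), X ω)) ≤
      entropy p (fun ω => (Q ω, (fun i => W i ω), X ω)) :=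
    entropy_pair_ge_snd p hp0 Q (fun ω => ((fun i => W i ω), X ω))
  have h4 : entropy p (fun ω => (Q ω, (fun i => W i ω), X ω))
      = entropy p (fun ω => (X ω, (Q ω, fun i => W i ω))) := by
    have := entropy_comp_inj p (fun ω => (Q ω, (fun i => W i ω), X ω))
      (fun t => (t.2.2, (t.1, t.2.1)))
      (fun a b h => by
        have hx := congrArg Prod.fst h
        have hq := congrArg (fun z => z.2.1) h
        have hw := congrArg (fun z => z.2.2) h
        exact Prod.ext_iff.mpr ⟨hq, Prod.ext_iff.mpr ⟨hw, hx⟩⟩)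
    exact this.symm
  have h5 : entropy p (fun ω => (X ω, (Q ω, fun i => W i ω)))
      = entropy p (fun ω => (Q ω, fun i => W i ω)) := by
    unfold condEntropy at hfun; linarith
  have h6 : entropy p (fun ω => (Q ω, fun i => W i ω))
      = entropy p Q + entropy p (fun ω i => W i ω) :=
    entropy_indep_pair p Q (fun ω i => W i ω) (fun q w => hQindep q w) hQ1 hW1
  linarith [h1, h3, ha, hb, hsec, h4, h5, h6]
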